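/- If m ≥ 5, then γ(Φ(X1X2X3⋯Xm)) = X1X2 · γ(Φ(X3⋯Xm)) − 2·X1X2 · β(Φ(X3⋯Xm)) in Sym^m(H) for all X1, …, Xm ∈ H, where on the right-hand side X1X2 multiplies inside the symmetric algebra Sym(H). -/

import Mathlib

noncomputable section

variable {H : Type*} [AddCommGroup H] [Module ℚ H]

/-- The pure tensor `X1 ⊗ ⋯ ⊗ Xm`, as the element `ι(X1)⋯ι(Xm)` of the
tensor algebra `T(H)`. -/
def word (l : List H) : TensorAlgebra ℚ H :=
  (l.map fun x => TensorAlgebra.ι ℚ x).prod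

/-- The Dynkin map `Φ(X1 X2 ⋯ Xm) = [X1,[X2,[⋯,[X_{m−1},Xm]⋯]]]`, with
`[a,b] := ab − ba` the commutator in `T(H)` and `Φ(X1) = X1`. -/
def dynkin : List H → TensorAlgebra ℚ H
  | [] => 0
  | [x] => TensorAlgebra.ι ℚ x
  | x :: y :: l =>
      TensorAlgebra.ι ℚ x * dynkin (y :: l) - dynkin (y :: l) * TensorAlgebra.ι ℚ x

variable {A : Type*} [CommRing A] [Algebra ℚ A]

/-- The monomial `X1 X2 ⋯ Xm` in the symmetric algebra `Sym(H)`, modelled by a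
commutative `ℚ`-algebra `A` equipped with a linear map `σ : H → A`. -/
def symword (σ : H →ₗ[ℚ] A) (l : List H) : A := (l.map fun x => σ x).prod

/-- `β = β_{Y,Z} : H^{⊗m} → Sym^m(H)` (for every `m ≥ 2` simultaneously) is the
linear map determined on pure tensors by
`β(X1⋯Xm) = −(Y·X1)·Z X2⋯Xm − (Y·Xm)·Z X1⋯X_{m−1} + (Z·X1)·Y X2⋯Xm + (Z·Xm)·Y X1⋯X_{m−1}`. -/
def IsBeta (ω : H →ₗ[ℚ] H →ₗ[ℚ] ℚ) (σ : H →ₗ[ℚ] A) (Y Z : H)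
    (β : TensorAlgebra ℚ H →ₗ[ℚ] A) : Prop :=
  ∀ (x z : H) (mid : List H),
    β (word (x :: (mid ++ [z]))) =
      -((ω Y x) • (σ Z * symword σ (mid ++ [z])))
        - (ω Y z) • (σ Z * symword σ (x :: mid))
        + (ω Z x) • (σ Y * symword σ (mid ++ [z]))
        + (ω Z z) • (σ Y * symword σ (x :: mid))

/-- `γ = γ_{Y,Z} : H^{⊗m} → Sym^m(H)` (for every `m ≥ 3` simultaneously) is the
linear map determined on pure tensors by
`γ(X1⋯Xm) = −(Y·X2)·Z X1X3⋯Xm − (Y·X_{m−1})·Z X1⋯X_{m−2}Xm + (Z·X2)·Y X1X3⋯Xm + (Z·X_{m−1})·Y X1⋯X_{m−2}Xm`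
(for `m = 3` the positions `2` and `m−1` coincide, so the corresponding terms add up). -/
def IsGamma (ω : H →ₗ[ℚ] H →ₗ[ℚ] ℚ) (σ : H →ₗ[ℚ] A) (Y Z : H)
    (γ : TensorAlgebra ℚ H →ₗ[ℚ] A) : Prop :=
  (∀ a b c : H,
    γ (word [a, b, c]) =
      -((ω Y b) • (σ Z * symword σ [a, c]))
        - (ω Y b) • (σ Z * symword σ [a, c])
        + (ω Z b) • (σ Y * symword σ [a, c])
        + (ω Z b) • (σ Y * symword σ [a, c])) ∧
  (∀ (a b : H) (mid : List H) (c d : H),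
    γ (word (a :: b :: (mid ++ [c, d]))) =
      -((ω Y b) • (σ Z * symword σ (a :: (mid ++ [c, d]))))
        - (ω Y c) • (σ Z * symword σ (a :: b :: (mid ++ [d])))
        + (ω Z b) • (σ Y * symword σ (a :: (mid ++ [c, d])))
        + (ω Z c) • (σ Y * symword σ (a :: b :: (mid ++ [d]))))

-- auxiliary lemmas


lemma word_cons (x : H) (l : List H) : word (x :: l) = TensorAlgebra.ι ℚ x * word l := by
  simp [word]

lemma word_append (l1 l2 : List H) : word (l1 ++ l2) = word l1 * word l2 := by
  simp [word]

lemma symword_cons (σ : H →ₗ[ℚ] A) (x : H) (l : List H) :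
    symword σ (x :: l) = σ x * symword σ l := by simp [symword]

lemma symword_append (σ : H →ₗ[ℚ] A) (l1 l2 : List H) :
    symword σ (l1 ++ l2) = symword σ l1 * symword σ l2 := by simp [symword]

lemma lift_word (σ : H →ₗ[ℚ] A) (l : List H) :
    TensorAlgebra.lift ℚ σ (word l) = symword σ l := by
  induction l with
  | nil => simp [word, symword]
  | cons a l ih =>
      rw [word_cons, symword_cons, map_mul, TensorAlgebra.lift_ι_apply, ih]

lemma lift_dynkin (σ : H →ₗ[ℚ] A) (a b : H) (l : List H) :
    TensorAlgebra.lift ℚ σ (dynkin (a :: b :: l)) = 0 := by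
  rw [dynkin, map_sub, map_mul, map_mul, mul_comm, sub_self]

lemma dynkin_mem (l : List H) :
    dynkin l ∈ Submodule.span ℚ {t | ∃ l' : List H, l'.length = l.length ∧ t = word l'} := by
  induction l with
  | nil => exact (by simp [dynkin] : dynkin ([] : List H) = 0) ▸ zero_mem _
  | cons a t ih =>
      cases t with
      | nil =>
          exact Submodule.subset_span ⟨[a], rfl, by simp [word, dynkin]⟩
      | cons b t' =>
          rw [dynkin]
          have key : ∀ u ∈ Submodule.span ℚ
              {t | ∃ l' : List H, l'.length = (b :: t').length ∧ t = word l'},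
              TensorAlgebra.ι ℚ a * u - u * TensorAlgebra.ι ℚ a ∈
                Submodule.span ℚ
                  {t | ∃ l' : List H, l'.length = (a :: b :: t').length ∧ t = word l'} := by
            intro u hu
            induction hu using Submodule.span_induction with
            | mem x hx =>
                obtain ⟨l', hlen, rfl⟩ := hx
                refine sub_mem (Submodule.subset_span ⟨a :: l', by simp [hlen], ?_⟩)
                  (Submodule.subset_span ⟨l' ++ [a], by simp [hlen], ?_⟩)
                · rw [word_cons]
                · rw [word_append]; simp [word]
            | zero => simpa using zero_mem _
            | add x y _ _ hx hy =>
                have : TensorAlgebra.ι ℚ a * (x + y) - (x + y) * TensorAlgebra.ι ℚ a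
                    = (TensorAlgebra.ι ℚ a * x - x * TensorAlgebra.ι ℚ a)
                      + (TensorAlgebra.ι ℚ a * y - y * TensorAlgebra.ι ℚ a) := by noncomm_ring
                rw [this]; exact add_mem hx hy
            | smul q x _ hx =>
                have : TensorAlgebra.ι ℚ a * (q • x) - (q • x) * TensorAlgebra.ι ℚ a
                    = q • (TensorAlgebra.ι ℚ a * x - x * TensorAlgebra.ι ℚ a) := by
                  rw [mul_smul_comm, smul_mul_assoc, smul_sub]
                rw [this]; exact Submodule.smul_mem _ _ hx
          exact key _ ih

lemma key_word (ω : H →ₗ[ℚ] H →ₗ[ℚ] ℚ) (σ : H →ₗ[ℚ] A) (Y Z : H)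
    (β : TensorAlgebra ℚ H →ₗ[ℚ] A) (hβ : IsBeta ω σ Y Z β)
    (γ : TensorAlgebra ℚ H →ₗ[ℚ] A) (hγ : IsGamma ω σ Y Z γ)
    (x y : H) (l : List H) (hl : 3 ≤ l.length) :
    γ (TensorAlgebra.ι ℚ x * TensorAlgebra.ι ℚ y * word l
        - TensorAlgebra.ι ℚ x * word l * TensorAlgebra.ι ℚ y
        - TensorAlgebra.ι ℚ y * word l * TensorAlgebra.ι ℚ x
        + word l * TensorAlgebra.ι ℚ y * TensorAlgebra.ι ℚ x) =
      σ x * σ y * γ (word l) - (2:ℚ) • (σ x * σ y * β (word l))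
        + (2:ℚ) • ((ω Z y • σ Y - ω Y y • σ Z) * (σ x * symword σ l)) := by
  rcases l with _ | ⟨a, _ | ⟨b, rest⟩⟩
  · simp at hl
  · simp at hl
  · rcases rest.eq_nil_or_concat with rfl | ⟨r, d, rfl⟩
    · simp at hl
    rcases r.eq_nil_or_concat with rfl | ⟨mid, c, rfl⟩
    · -- l = [a, b, d]
      simp only [List.concat_eq_append, List.nil_append]
      have w1 : TensorAlgebra.ι ℚ x * TensorAlgebra.ι ℚ y * word [a, b, d]
          = word (x :: y :: ([a] ++ [b, d])) := by simp [word, mul_assoc]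
      have w2 : TensorAlgebra.ι ℚ x * word [a, b, d] * TensorAlgebra.ι ℚ y
          = word (x :: a :: ([b] ++ [d, y])) := by simp [word, mul_assoc]
      have w3 : TensorAlgebra.ι ℚ y * word [a, b, d] * TensorAlgebra.ι ℚ x
          = word (y :: a :: ([b] ++ [d, x])) := by simp [word, mul_assoc]
      have w4 : word [a, b, d] * TensorAlgebra.ι ℚ y * TensorAlgebra.ι ℚ x
          = word (a :: b :: ([d] ++ [y, x])) := by simp [word, mul_assoc]
      have wβ : (word [a, b, d] : TensorAlgebra ℚ H) = word (a :: ([b] ++ [d])) := by simp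
      rw [map_add, map_sub, map_sub, w1, w2, w3, w4,
        hγ.2 x y [a] b d, hγ.2 x a [b] d y, hγ.2 y a [b] d x, hγ.2 a b [d] y x,
        hγ.1 a b d, wβ, hβ a d [b]]
      simp only [symword, List.map_append, List.map_cons, List.map_nil,
        List.prod_append, List.prod_cons, List.prod_nil, mul_one,
        Algebra.smul_def, map_ofNat]
      ring
    · -- l = a :: b :: mid ++ [c, d]
      simp only [List.concat_eq_append, List.append_assoc, List.cons_append, List.nil_append]
      have w1 : TensorAlgebra.ι ℚ x * TensorAlgebra.ι ℚ y * word (a :: b :: (mid ++ [c, d]))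
          = word (x :: y :: ((a :: b :: mid) ++ [c, d])) := by simp [word, mul_assoc]
      have w2 : TensorAlgebra.ι ℚ x * word (a :: b :: (mid ++ [c, d])) * TensorAlgebra.ι ℚ y
          = word (x :: a :: ((b :: mid ++ [c]) ++ [d, y])) := by simp [word, mul_assoc]
      have w3 : TensorAlgebra.ι ℚ y * word (a :: b :: (mid ++ [c, d])) * TensorAlgebra.ι ℚ x
          = word (y :: a :: ((b :: mid ++ [c]) ++ [d, x])) := by simp [word, mul_assoc]
      have w4 : word (a :: b :: (mid ++ [c, d])) * TensorAlgebra.ι ℚ y * TensorAlgebra.ι ℚ x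
          = word (a :: b :: ((mid ++ [c, d]) ++ [y, x])) := by simp [word, mul_assoc]
      have wβ : word (a :: b :: (mid ++ [c, d])) = word (a :: ((b :: mid ++ [c]) ++ [d])) := by
        simp [word, mul_assoc]
      rw [map_add, map_sub, map_sub, w1, w2, w3, w4,
        hγ.2 x y (a :: b :: mid) c d, hγ.2 x a (b :: mid ++ [c]) d y,
        hγ.2 y a (b :: mid ++ [c]) d x, hγ.2 a b (mid ++ [c, d]) y x,
        hγ.2 a b mid c d, wβ, hβ a d (b :: mid ++ [c])]
      simp only [symword, List.map_append, List.map_cons, List.map_nil,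
        List.prod_append, List.prod_cons, List.prod_nil, mul_one,
        Algebra.smul_def, map_ofNat]
      ring

/-- Lemma (Kawazumi–Kuno, Lemma on γ, part (3)): if `m ≥ 5`, then
`γ(Φ(X1 X2 X3 ⋯ Xm)) = X1X2 · γ(Φ(X3⋯Xm)) − 2·X1X2 · β(Φ(X3⋯Xm))` in `Sym^m(H)`.
Here the list `x1 :: x2 :: l` with `l.length ≥ 3` is the word `X1 X2 X3 ⋯ Xm`, `m ≥ 5`. -/
theorem stmt9 (ω : H →ₗ[ℚ] H →ₗ[ℚ] ℚ) (hω : ∀ x, ω x x = 0)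
    (σ : H →ₗ[ℚ] A) (Y Z : H)
    (β : TensorAlgebra ℚ H →ₗ[ℚ] A) (hβ : IsBeta ω σ Y Z β)
    (γ : TensorAlgebra ℚ H →ₗ[ℚ] A) (hγ : IsGamma ω σ Y Z γ)
    (x1 x2 : H) (l : List H) (hl : 3 ≤ l.length) :
    γ (dynkin (x1 :: x2 :: l)) =
      σ x1 * σ x2 * γ (dynkin l) - (2 : ℚ) • (σ x1 * σ x2 * β (dynkin l)) := by
  rcases l with _ | ⟨z1, _ | ⟨z2, l0⟩⟩
  · simp at hl
  · simp at hl
  set l : List H := z1 :: z2 :: l0 with hldef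
  have hexp : dynkin (x1 :: x2 :: l) =
      TensorAlgebra.ι ℚ x1 * TensorAlgebra.ι ℚ x2 * dynkin l
        - TensorAlgebra.ι ℚ x1 * dynkin l * TensorAlgebra.ι ℚ x2
        - TensorAlgebra.ι ℚ x2 * dynkin l * TensorAlgebra.ι ℚ x1
        + dynkin l * TensorAlgebra.ι ℚ x2 * TensorAlgebra.ι ℚ x1 := by
    rw [show dynkin (x1 :: x2 :: l) = TensorAlgebra.ι ℚ x1 * dynkin (x2 :: l)
        - dynkin (x2 :: l) * TensorAlgebra.ι ℚ x1 from rfl,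
      show dynkin (x2 :: l) = TensorAlgebra.ι ℚ x2 * dynkin l
        - dynkin l * TensorAlgebra.ι ℚ x2 from rfl]
    noncomm_ring
  have hP : ∀ t ∈ Submodule.span ℚ {t | ∃ l' : List H, l'.length = l.length ∧ t = word l'},
      γ (TensorAlgebra.ι ℚ x1 * TensorAlgebra.ι ℚ x2 * t
          - TensorAlgebra.ι ℚ x1 * t * TensorAlgebra.ι ℚ x2
          - TensorAlgebra.ι ℚ x2 * t * TensorAlgebra.ι ℚ x1
          + t * TensorAlgebra.ι ℚ x2 * TensorAlgebra.ι ℚ x1) =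
        σ x1 * σ x2 * γ t - (2:ℚ) • (σ x1 * σ x2 * β t)
          + (2:ℚ) • ((ω Z x2 • σ Y - ω Y x2 • σ Z)
              * (σ x1 * TensorAlgebra.lift ℚ σ t)) := by
    intro t ht
    induction ht using Submodule.span_induction with
    | mem u hu =>
        obtain ⟨l', hlen, rfl⟩ := hu
        rw [lift_word]
        exact key_word ω σ Y Z β hβ γ hγ x1 x2 l' (by rw [hlen]; exact hl)
    | zero => simp
    | add u v _ _ hu hv =>
        have e : TensorAlgebra.ι ℚ x1 * TensorAlgebra.ι ℚ x2 * (u + v)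
            - TensorAlgebra.ι ℚ x1 * (u + v) * TensorAlgebra.ι ℚ x2
            - TensorAlgebra.ι ℚ x2 * (u + v) * TensorAlgebra.ι ℚ x1
            + (u + v) * TensorAlgebra.ι ℚ x2 * TensorAlgebra.ι ℚ x1
            = (TensorAlgebra.ι ℚ x1 * TensorAlgebra.ι ℚ x2 * u
                - TensorAlgebra.ι ℚ x1 * u * TensorAlgebra.ι ℚ x2
                - TensorAlgebra.ι ℚ x2 * u * TensorAlgebra.ι ℚ x1
                + u * TensorAlgebra.ι ℚ x2 * TensorAlgebra.ι ℚ x1)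
              + (TensorAlgebra.ι ℚ x1 * TensorAlgebra.ι ℚ x2 * v
                - TensorAlgebra.ι ℚ x1 * v * TensorAlgebra.ι ℚ x2
                - TensorAlgebra.ι ℚ x2 * v * TensorAlgebra.ι ℚ x1
                + v * TensorAlgebra.ι ℚ x2 * TensorAlgebra.ι ℚ x1) := by noncomm_ring
        rw [e, map_add, hu, hv, map_add, map_add, map_add]
        simp only [Algebra.smul_def, map_ofNat]
        ring
    | smul q u _ hu =>
        have e : TensorAlgebra.ι ℚ x1 * TensorAlgebra.ι ℚ x2 * (q • u)
            - TensorAlgebra.ι ℚ x1 * (q • u) * TensorAlgebra.ι ℚ x2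
            - TensorAlgebra.ι ℚ x2 * (q • u) * TensorAlgebra.ι ℚ x1
            + (q • u) * TensorAlgebra.ι ℚ x2 * TensorAlgebra.ι ℚ x1
            = q • (TensorAlgebra.ι ℚ x1 * TensorAlgebra.ι ℚ x2 * u
                - TensorAlgebra.ι ℚ x1 * u * TensorAlgebra.ι ℚ x2
                - TensorAlgebra.ι ℚ x2 * u * TensorAlgebra.ι ℚ x1
                + u * TensorAlgebra.ι ℚ x2 * TensorAlgebra.ι ℚ x1) := by
          simp only [mul_smul_comm, smul_mul_assoc, smul_sub, smul_add]
        rw [e, map_smul, hu]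
        simp only [map_smul]
        simp only [smul_sub, smul_add, Algebra.smul_def, map_ofNat]
        ring
  have hfin := hP (dynkin l) (dynkin_mem l)
  rw [hldef] at hfin ⊢
  rw [lift_dynkin σ z1 z2 l0] at hfin
  rw [hexp] at *
  rw [hfin]
  simp

end
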